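/- arXiv:1010.5130 — 4 statements merged into one kernel-verified Lean document; each statement's English description precedes it below -/
import Mathlib

section
/- Let l_1, …, l_k and m_1, …, m_r be finitely many linear functionals on ℝ^n, and define w_L(x) = max_i l_i(x) and w_K(x) = max_j m_j(x). Then the following are equivalent: (a) there exists ε_0 > 0 such that for all ε ∈ (0, ε_0) and all nonzero x ∈ ℝ^n one has w_L(x) + ε·w_K(x) > 0; (b) w_L(x) ≥ 0 for all x ∈ ℝ^n, and w_K(x) > 0 for every nonzero x ∈ ℝ^n with w_L(x) = 0. -/
private lemma aux_main {n : ℕ} (f g : EuclideanSpace ℝ (Fin n) → ℝ)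
    (hf : Continuous f) (hg : Continuous g)
    (hfh : ∀ c : ℝ, 0 ≤ c → ∀ x, f (c • x) = c * f x)
    (hgh : ∀ c : ℝ, 0 ≤ c → ∀ x, g (c • x) = c * g x) :
    (∃ ε₀ > (0 : ℝ), ∀ ε : ℝ, 0 < ε → ε < ε₀ →
        ∀ x : EuclideanSpace ℝ (Fin n), x ≠ 0 → 0 < f x + ε * g x) ↔
      ((∀ x, 0 ≤ f x) ∧ (∀ x, x ≠ 0 → f x = 0 → 0 < g x)) := by
  constructor
  · rintro ⟨ε₀, hε₀, h⟩
    constructor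
    · intro x
      by_cases hx : x = 0
      · have := hfh 0 le_rfl 0
        simp at this
        rw [hx]
        exact this.ge
      · by_contra hneg
        push_neg at hneg
        by_cases hb : g x ≤ 0
        · have := h (ε₀ / 2) (by linarith) (by linarith) x hx
          nlinarith
        · push_neg at hb
          set ε := min (ε₀ / 2) (-(f x) / (2 * g x)) with hε
          have hεpos : 0 < ε := lt_min (by linarith) (div_pos (by linarith) (by linarith))
          have hlt := h ε hεpos (lt_of_le_of_lt (min_le_left _ _) (by linarith)) x hx
          have hεle : ε ≤ -(f x) / (2 * g x) := min_le_right _ _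
          rw [le_div_iff₀ (by linarith)] at hεle
          nlinarith
    · intro x hx h0
      have := h (ε₀ / 2) (by linarith) (by linarith) x hx
      rw [h0] at this
      nlinarith
  · rintro ⟨h1, h2⟩
    by_cases hS : (Metric.sphere (0 : EuclideanSpace ℝ (Fin n)) 1).Nonempty
    · obtain ⟨y₀, hy₀, hmax⟩ := (isCompact_sphere (0 : EuclideanSpace ℝ (Fin n)) 1).exists_isMaxOn
        hS hg.abs.continuousOn
      set M : ℝ := |g y₀| with hMdef
      have hM : ∀ y ∈ Metric.sphere (0 : EuclideanSpace ℝ (Fin n)) 1, |g y| ≤ M := hmax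
      have hM0 : 0 ≤ M := abs_nonneg _
      obtain ⟨y₁, hy₁, hmin⟩ := (isCompact_sphere (0 : EuclideanSpace ℝ (Fin n)) 1).exists_isMinOn
        hS ((hf.max hg).continuousOn)
      set δ : ℝ := max (f y₁) (g y₁) with hδ
      have hδpos : 0 < δ := by
        have hy₁ne : y₁ ≠ 0 := by
          intro h0
          rw [h0] at hy₁
          simp at hy₁
        rcases lt_or_eq_of_le (h1 y₁) with hpos | heq
        · exact lt_max_of_lt_left hpos
        · exact lt_max_of_lt_right (h2 y₁ hy₁ne heq.symm)
      refine ⟨δ / (M + 1), by positivity, fun ε hε hε' x hx => ?_⟩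
      have hnx : (0 : ℝ) < ‖x‖ := norm_pos_iff.mpr hx
      set y : EuclideanSpace ℝ (Fin n) := ‖x‖⁻¹ • x with hy
      have hyS : y ∈ Metric.sphere (0 : EuclideanSpace ℝ (Fin n)) 1 := by
        simp [hy, norm_smul, abs_of_pos (inv_pos.mpr hnx), inv_mul_cancel₀ hnx.ne']
      have hxy : x = ‖x‖ • y := by
        rw [hy, smul_smul, mul_inv_cancel₀ hnx.ne', one_smul]
      have hLx : f x = ‖x‖ * f y :=
        (congrArg f hxy).trans (hfh _ hnx.le y)
      have hKx : g x = ‖x‖ * g y :=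
        (congrArg g hxy).trans (hgh _ hnx.le y)
      rw [hLx, hKx]
      have key : 0 < f y + ε * g y := by
        by_cases hgy : 0 < g y
        · have : 0 ≤ f y := h1 y
          nlinarith
        · push_neg at hgy
          have hLy : δ ≤ f y := by
            have hmy := hmin hyS
            calc δ ≤ max (f y) (g y) := hmy
              _ = f y := max_eq_left (le_trans hgy (h1 y))
          have hbound : |g y| ≤ M := hM y hyS
          have habs : -(g y) ≤ M := (neg_le_abs _).trans hbound
          have hεM : ε * M < δ := by
            rcases eq_or_lt_of_le hM0 with hM0' | hM0'
            · rw [← hM0', mul_zero]; exact hδpos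
            · calc ε * M < δ / (M + 1) * M := mul_lt_mul_of_pos_right hε' hM0'
                _ < δ := by
                    rw [div_mul_eq_mul_div, div_lt_iff₀ (by linarith)]
                    nlinarith
          nlinarith [mul_le_mul_of_nonneg_left habs hε.le]
      nlinarith
    · refine ⟨1, one_pos, fun ε hε hε' x hx => absurd ?_ hS⟩
      have hnx : (0 : ℝ) < ‖x‖ := norm_pos_iff.mpr hx
      exact ⟨‖x‖⁻¹ • x, by
        simp [norm_smul, abs_of_pos (inv_pos.mpr hnx), inv_mul_cancel₀ hnx.ne']⟩

private lemma aux_sup'_smul {n k : ℕ} (l : Fin (k + 1) → (EuclideanSpace ℝ (Fin n) →ₗ[ℝ] ℝ))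
    {c : ℝ} (hc : 0 ≤ c) (x : EuclideanSpace ℝ (Fin n)) :
    (Finset.univ.sup' Finset.univ_nonempty fun i => l i (c • x)) =
      c * Finset.univ.sup' Finset.univ_nonempty fun i => l i x := by
  rw [Finset.comp_sup'_eq_sup'_comp (g := fun t => c * t)]
  · simp [Function.comp, map_smul, smul_eq_mul]
  · intro a b
    exact mul_max_of_nonneg a b hc

private lemma aux_cont {n k : ℕ} (l : Fin (k + 1) → (EuclideanSpace ℝ (Fin n) →ₗ[ℝ] ℝ)) :
    Continuous (fun x : EuclideanSpace ℝ (Fin n) =>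
      Finset.univ.sup' Finset.univ_nonempty fun i => l i x) :=
  Continuous.finset_sup'_apply _ fun i _ => (l i).continuous_of_finiteDimensional

/-- For piecewise-linear weight functions `wL = max_i l_i` and
`wK = max_j m_j` given by finitely many linear functionals on `ℝⁿ`, the following are
equivalent: (a) there is `ε₀ > 0` such that `wL x + ε * wK x > 0` for all
`ε ∈ (0, ε₀)` and all nonzero `x`; (b) `wL ≥ 0` everywhere and `wK x > 0` whenever
`x ≠ 0` and `wL x = 0`. -/
theorem stmt_1 (n k r : ℕ)
    (l : Fin (k + 1) → (EuclideanSpace ℝ (Fin n) →ₗ[ℝ] ℝ))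
    (m : Fin (r + 1) → (EuclideanSpace ℝ (Fin n) →ₗ[ℝ] ℝ)) :
    (∃ ε₀ > (0 : ℝ), ∀ ε : ℝ, 0 < ε → ε < ε₀ →
        ∀ x : EuclideanSpace ℝ (Fin n), x ≠ 0 →
          0 < (Finset.univ.sup' Finset.univ_nonempty fun i => l i x) +
              ε * (Finset.univ.sup' Finset.univ_nonempty fun j => m j x)) ↔
      ((∀ x : EuclideanSpace ℝ (Fin n),
          0 ≤ Finset.univ.sup' Finset.univ_nonempty fun i => l i x) ∧
        (∀ x : EuclideanSpace ℝ (Fin n), x ≠ 0 →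
          (Finset.univ.sup' Finset.univ_nonempty fun i => l i x) = 0 →
          0 < Finset.univ.sup' Finset.univ_nonempty fun j => m j x)) :=
  aux_main _ _ (aux_cont l) (aux_cont m)
    (fun c hc x => aux_sup'_smul l hc x) (fun c hc x => aux_sup'_smul m hc x)
end

section
/- Let A be a k × n matrix with rational entries and let m_1, …, m_r be linear functionals on ℝ^n with rational coefficients. If max_j m_j(x) > 0 for every nonzero rational vector x ∈ ℚ^n satisfying Ax ≤ 0 componentwise, then max_j m_j(x) > 0 for every nonzero real vector x ∈ ℝ^n satisfying Ax ≤ 0. -/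
/-!
Stack the rows of `A` on the functionals `m j` into one rational matrix `B`; a real
counterexample is a nonzero real point of the cone `B x ≤ 0`, and it suffices to show that
rational points of this cone are dense in its real points. Near `x` the rows with
`(B x) i < 0` stay negative, and the rows with `(B x) i = 0` cut out a rational subspace.
Its rational points are dense in its real points: choosing `ℚ`-linear maps `φ l : ℝ → ℚ` and
reals `e l` with `x j = ∑ l, φ l (x j) * e l`, each `φ l ∘ x` is a rational kernel vector, so
replacing the `e l` by nearby rationals gives rational kernel vectors close to `x`.
-/

open Filter Topology Matrix

theorem Module.exists_sum_linearMap_smul_eq {K V ι : Type*} [Field K] [AddCommGroup V]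
    [Module K V] [Finite ι] (x : ι → V) :
    ∃ (d : ℕ) (e : Fin d → V) (φ : Fin d → V →ₗ[K] K), ∀ j, ∑ l, φ l (x j) • e l = x j := by
  set W := Submodule.span K (Set.range x)
  have : FiniteDimensional K W := FiniteDimensional.span_of_finite K (Set.finite_range x)
  obtain ⟨π, hπ⟩ := W.subtype.exists_leftInverse_of_injective W.ker_subtype
  let b := Module.finBasis K W
  refine ⟨_, fun l => b l, fun l => b.coord l ∘ₗ π, fun j => ?_⟩
  let w : W := ⟨x j, Submodule.subset_span (Set.mem_range_self j)⟩
  have hπw : π (x j) = w := LinearMap.congr_fun hπ w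
  simp only [LinearMap.comp_apply, hπw, Module.Basis.coord_apply]
  exact_mod_cast congrArg W.subtype (b.sum_repr w)

section RationalPoints

variable {m n : Type*} [Fintype n]

lemma Matrix.ratCast_mulVec_apply (B : Matrix m n ℚ) (q : n → ℚ) (i : m) :
    ((B *ᵥ q) i : ℝ) = (B.map (↑) *ᵥ fun j => (q j : ℝ)) i :=
  (Rat.castHom ℝ).map_mulVec B q i

theorem Matrix.mem_closure_ratCast_ker (C : Matrix m n ℚ) {x : n → ℝ}
    (hx : C.map (↑) *ᵥ x = 0) :
    x ∈ closure ((fun q j => (q j : ℝ)) '' {q | C *ᵥ q = 0}) := by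
  obtain ⟨d, e, φ, hφ⟩ := Module.exists_sum_linearMap_smul_eq (K := ℚ) x
  set a : Fin d → n → ℚ := fun l j => φ l (x j)
  have ha : ∀ l, C *ᵥ a l = 0 := fun l => by
    ext i
    have : ∑ j, C i j * φ l (x j) = φ l ((C.map (↑) *ᵥ x) i) := by
      simp [Matrix.mulVec, dotProduct, ← Rat.smul_def]
    change ∑ j, C i j * φ l (x j) = 0
    simp [this, hx]
  set F : (Fin d → ℝ) → n → ℝ := fun c => ∑ l, c l • fun j => (a l j : ℝ)
  have hF : Continuous F := by fun_prop
  have hFe : F e = x := by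
    ext j
    simpa [F, a, Rat.smul_def, mul_comm] using hφ j
  rw [← hFe]
  refine map_mem_closure hF (DenseRange.piMap (fun _ => Rat.denseRange_cast) e) ?_
  rintro _ ⟨r, rfl⟩
  refine ⟨∑ l, r l • a l, ?_, ?_⟩
  · simp [Matrix.mulVec_sum, Matrix.mulVec_smul, ha]
  · ext j
    simp [F]

theorem Matrix.mem_closure_ratCast_cone [Finite m] (B : Matrix m n ℚ) {x : n → ℝ}
    (hx : ∀ i, (B.map (↑) *ᵥ x) i ≤ 0) :
    x ∈ closure ((fun q j => (q j : ℝ)) '' {q | ∀ i, (B *ᵥ q) i ≤ 0}) := by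
  set Bℝ : Matrix m n ℝ := B.map (↑)
  let C : Matrix {i // (Bℝ *ᵥ x) i = 0} n ℚ := B.submatrix Subtype.val id
  have hC : ∃ᶠ y in 𝓝 x, y ∈ (fun q j => (q j : ℝ)) '' {q | C *ᵥ q = 0} :=
    mem_closure_iff_frequently.mp (C.mem_closure_ratCast_ker (funext fun i => i.2))
  have hstrict : ∀ᶠ y in 𝓝 x, ∀ i, (Bℝ *ᵥ x) i < 0 → (Bℝ *ᵥ y) i < 0 := by
    refine eventually_all.mpr fun i => eventually_imp_distrib_left.mpr fun hlt => ?_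
    have : Continuous fun y => (Bℝ *ᵥ y) i := by fun_prop
    exact this.continuousAt.eventually_lt continuousAt_const hlt
  refine mem_closure_iff_frequently.mpr ((hC.and_eventually hstrict).mono ?_)
  rintro _ ⟨⟨q, hq, rfl⟩, hneg⟩
  refine ⟨q, fun i => ?_, rfl⟩
  rcases (hx i).lt_or_eq with hlt | heq
  · exact_mod_cast (B.ratCast_mulVec_apply q i ▸ hneg i hlt).le
  · exact (congrFun hq ⟨i, heq⟩).le

theorem Matrix.exists_ne_zero_mulVec_nonpos_of_ratCast [Finite m] (B : Matrix m n ℚ)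
    {x : n → ℝ} (hx : ∀ i, (B.map (↑) *ᵥ x) i ≤ 0) (hx0 : x ≠ 0) :
    ∃ q : n → ℚ, q ≠ 0 ∧ ∀ i, (B *ᵥ q) i ≤ 0 := by
  obtain ⟨_, hy0, q, hq, rfl⟩ :=
    mem_closure_iff_nhds.mp (B.mem_closure_ratCast_cone hx) _ (isOpen_ne.mem_nhds hx0)
  refine ⟨q, ?_, hq⟩
  rintro rfl
  exact hy0 (funext fun _ => Rat.cast_zero)

end RationalPoints

/-- Let `A` be a `k × n` rational matrix and `m_0, …, m_r` linear
functionals on `ℝⁿ` with rational coefficients. If `max_j m_j x > 0` for every nonzero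
rational vector `x` with `A x ≤ 0` componentwise, then the same holds for every nonzero
real vector `x` with `A x ≤ 0` componentwise. -/
theorem stmt_2 (k n r : ℕ) (A : Matrix (Fin k) (Fin n) ℚ)
    (m : Fin (r + 1) → Fin n → ℚ)
    (hQ : ∀ x : Fin n → ℚ, x ≠ 0 → (∀ i, A.mulVec x i ≤ 0) →
        0 < Finset.univ.sup' Finset.univ_nonempty fun j => ∑ i, m j i * x i) :
    ∀ x : Fin n → ℝ, x ≠ 0 →
      (∀ i, (A.map (fun a : ℚ => (a : ℝ))).mulVec x i ≤ 0) →
      0 < Finset.univ.sup' Finset.univ_nonempty fun j => ∑ i, (m j i : ℝ) * x i := by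
  intro x hx hAx
  by_contra hle
  simp only [not_lt, Finset.sup'_le_iff, Finset.mem_univ, true_implies] at hle
  obtain ⟨q, hq0, hBq⟩ := (A.fromRows (Matrix.of m)).exists_ne_zero_mulVec_nonpos_of_ratCast
    (x := x) (by rintro (i | j); exacts [hAx i, hle j]) hx
  obtain ⟨j, -, hj⟩ := (Finset.lt_sup'_iff _).mp (hQ q hq0 fun i => hBq (Sum.inl i))
  exact hj.not_ge (hBq (Sum.inr j))
end

section
/- Fix an integer m ≥ 3 and real numbers a_0 ≠ 0, a_1, h, k. For ε > 0 define ã_0(ε) = a_0 − ε^m/m!, ã_1(ε) = a_1 − ε^{m−1}/(2(m−2)!), b̃_0(ε) = (ε^m/m!)·h + (ε^{m+1}/(m+1)!)·k, and b̃_1(ε) = (ε^{m−1}/(2(m−2)!))·h + ((m−2)ε^m/(2·m!))·k. Then as ε → 0⁺, (ã_1(ε)/ã_0(ε))·b̃_0(ε) − b̃_1(ε) = −(ε^{m−1}/(2(m−2)!))·h − (ε^m/m!)·((m−2)k/2 − (a_1/a_0)·h) + O(ε^{m+1}). -/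
open Filter Asymptotics

/-- Futaki invariant expansion on the blowup, `m ≥ 3`: with
`ã₀(ε) = a₀ − ε^m/m!`, `ã₁(ε) = a₁ − ε^(m−1)/(2(m−2)!)`,
`b̃₀(ε) = (ε^m/m!)·h + (ε^(m+1)/(m+1)!)·k`,
`b̃₁(ε) = (ε^(m−1)/(2(m−2)!))·h + ((m−2)ε^m/(2·m!))·k`, one has, as `ε → 0⁺`,
`(ã₁/ã₀)·b̃₀ − b̃₁ = −(ε^(m−1)/(2(m−2)!))·h − (ε^m/m!)·((m−2)k/2 − (a₁/a₀)h) + O(ε^(m+1))`. -/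
theorem stmt_9 (m : ℕ) (hm : 3 ≤ m) (a0 a1 h k : ℝ) (ha0 : a0 ≠ 0) :
    (fun ε : ℝ =>
        ((a1 - ε ^ (m - 1) / (2 * (Nat.factorial (m - 2) : ℝ))) /
            (a0 - ε ^ m / (Nat.factorial m : ℝ))) *
          (ε ^ m / (Nat.factorial m : ℝ) * h + ε ^ (m + 1) / (Nat.factorial (m + 1) : ℝ) * k) -
        (ε ^ (m - 1) / (2 * (Nat.factorial (m - 2) : ℝ)) * h +
          ((m : ℝ) - 2) * ε ^ m / (2 * (Nat.factorial m : ℝ)) * k) -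
        (-(ε ^ (m - 1) / (2 * (Nat.factorial (m - 2) : ℝ))) * h -
          ε ^ m / (Nat.factorial m : ℝ) * (((m : ℝ) - 2) * k / 2 - a1 / a0 * h))) =O[nhdsWithin 0 (Set.Ioi 0)]
      (fun ε : ℝ => ε ^ (m + 1)) := by
  obtain ⟨n, rfl⟩ : ∃ n, m = n + 3 := ⟨m - 3, by omega⟩
  set l := nhdsWithin (0:ℝ) (Set.Ioi 0) with hl
  have hfac3 : ((Nat.factorial (n+3) : ℝ)) ≠ 0 := Nat.cast_ne_zero.mpr (Nat.factorial_ne_zero _)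
  have hfac1 : ((Nat.factorial (n+1) : ℝ)) ≠ 0 := Nat.cast_ne_zero.mpr (Nat.factorial_ne_zero _)
  have hfac4 : ((Nat.factorial (n+4) : ℝ)) ≠ 0 := Nat.cast_ne_zero.mpr (Nat.factorial_ne_zero _)
  have hc : Continuous (fun ε : ℝ => a0 - ε ^ (n+3) / (Nat.factorial (n+3) : ℝ)) := by
    continuity
  have hden : Tendsto (fun ε : ℝ => a0 - ε ^ (n+3) / (Nat.factorial (n+3) : ℝ)) l (nhds a0) := by
    have := (hc.tendsto 0).mono_left (nhdsWithin_le_nhds (s := Set.Ioi (0:ℝ)))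
    simpa using this
  have hne : ∀ᶠ ε in l, a0 - ε ^ (n+3) / (Nat.factorial (n+3) : ℝ) ≠ 0 :=
    hden.eventually_ne ha0
  set g : ℝ → ℝ := fun ε =>
    ε ^ (n+1) * ((a1 * ε / (Nat.factorial (n+3) : ℝ) - a0 / (2 * (Nat.factorial (n+1) : ℝ))) *
      (h / (Nat.factorial (n+3) : ℝ) + ε * k / (Nat.factorial (n+4) : ℝ))) /
      (a0 * (a0 - ε ^ (n+3) / (Nat.factorial (n+3) : ℝ))) +
      a1 * k / (a0 * (Nat.factorial (n+4) : ℝ)) with hg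
  have hgc : ContinuousAt g 0 := by
    apply ContinuousAt.add
    · apply ContinuousAt.div
      · fun_prop
      · fun_prop
      · simp [mul_ne_zero ha0 ha0]
    · exact continuousAt_const
  have hgt : Tendsto g l (nhds (g 0)) := hgc.tendsto.mono_left nhdsWithin_le_nhds
  have hg1 : g =O[l] (fun _ : ℝ => (1 : ℝ)) := hgt.isBigO_one ℝ
  have key : (fun ε : ℝ => ε ^ (n+4) * g ε) =O[l] (fun ε : ℝ => ε ^ (n+4)) := by
    have := (isBigO_refl (fun ε : ℝ => ε ^ (n+4)) l).mul hg1
    simpa using this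
  have e1 : n + 3 - 1 = n + 2 := by omega
  have e2 : n + 3 - 2 = n + 1 := by omega
  have e3 : n + 3 + 1 = n + 4 := by omega
  refine key.congr' ?_ EventuallyEq.rfl
  filter_upwards [hne] with ε hεne
  rw [hg]
  simp only [e1, e2, e3]
  have h2fac1 : (2 : ℝ) * (Nat.factorial (n+1) : ℝ) ≠ 0 := by
    positivity
  set D := a0 - ε ^ (n+3) / (Nat.factorial (n+3) : ℝ) with hD
  field_simp
  rw [hD]
  field_simp
  ring
end

section
/- Let m ≥ 3 be an integer and let ξ be a real-valued function that is smooth on an open interval containing 0, satisfies ξ(0) = 1/2, and solves the ordinary differential equation ξ(t)^{m−1}·ξ′(t) − (m−1)·t^{m−2}·ξ(t) + (m−2)·t^{m−1} = 0 on that interval. Then, as t → 0, ξ(t) = 1/2 + 2^{m−2}·t^{m−1} − ((m−2)/m)·2^{m−1}·t^m + O(t^{m+1}). -/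
open Filter

lemma aux_pow_sub_pow (x y : ℝ) (hx : |x| ≤ 1) (hy : |y| ≤ 1) (n : ℕ) :
    |x ^ n - y ^ n| ≤ n * |x - y| := by
  induction n with
  | zero => simp
  | succ n ih =>
    have h : x ^ (n+1) - y ^ (n+1) = x ^ n * (x - y) + y * (x ^ n - y ^ n) := by ring
    rw [h]
    have h1 : |x ^ n| ≤ 1 := by rw [abs_pow]; exact pow_le_one₀ (abs_nonneg x) hx
    calc |x ^ n * (x - y) + y * (x ^ n - y ^ n)|
        ≤ |x ^ n| * |x - y| + |y| * |x ^ n - y ^ n| := by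
          rw [← abs_mul, ← abs_mul]; exact abs_add_le _ _
      _ ≤ 1 * |x - y| + 1 * (n * |x - y|) := by gcongr
      _ = (↑(n + 1)) * |x - y| := by push_cast; ring

lemma aux_mvt (δ : ℝ) (C : ℝ) (hC : 0 ≤ C) (n : ℕ) (g g' : ℝ → ℝ)
    (hg : ∀ s ∈ Set.Icc (-δ) δ, HasDerivAt g (g' s) s)
    (hg' : ∀ s ∈ Set.Icc (-δ) δ, |g' s| ≤ C * |s| ^ n) :
    ∀ t ∈ Set.Icc (-δ) δ, |g t - g 0| ≤ C * |t| ^ (n + 1) := by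
  intro t ht
  have habs : ∀ s ∈ Set.uIcc 0 t, |s| ≤ |t| := by
    intro s hs
    rcases le_total 0 t with h | h
    · rw [Set.uIcc_of_le h] at hs
      rw [abs_of_nonneg hs.1, abs_of_nonneg h]; exact hs.2
    · rw [Set.uIcc_of_ge h] at hs
      rw [abs_of_nonpos hs.2, abs_of_nonpos h]; linarith [hs.1]
  have hsub : Set.uIcc 0 t ⊆ Set.Icc (-δ) δ := by
    intro s hs
    have h1 := habs s hs
    have h2 : |t| ≤ δ := abs_le.2 ⟨ht.1, ht.2⟩
    exact abs_le.1 (h1.trans h2)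
  have key := Convex.norm_image_sub_le_of_norm_hasDerivWithin_le
    (f := g) (f' := g') (s := Set.uIcc 0 t) (C := C * |t| ^ n)
    (fun s hs => (hg s (hsub hs)).hasDerivWithinAt)
    (fun s hs => by
      refine (hg' s (hsub hs)).trans ?_
      exact mul_le_mul_of_nonneg_left (pow_le_pow_left₀ (abs_nonneg s) (habs s hs) n) hC)
    (convex_uIcc 0 t) Set.left_mem_uIcc Set.right_mem_uIcc
  have : |g t - g 0| ≤ C * |t| ^ n * |t - 0| := key
  rw [sub_zero] at this
  calc |g t - g 0| ≤ C * |t| ^ n * |t| := this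
    _ = C * |t| ^ (n+1) := by ring

/-- ODE asymptotics for the Burns–Simanca metric: if `m ≥ 3` and `ξ` is
smooth on an open interval `(a, b)` containing `0`, with `ξ 0 = 1/2` and satisfying
`ξ(t)^(m−1)·ξ′(t) − (m−1)·t^(m−2)·ξ(t) + (m−2)·t^(m−1) = 0` on that interval, then as
`t → 0`, `ξ(t) = 1/2 + 2^(m−2)·t^(m−1) − ((m−2)/m)·2^(m−1)·t^m + O(t^(m+1))`. -/
theorem stmt_11 (m : ℕ) (hm : 3 ≤ m) (a b : ℝ) (ha : a < 0) (hb : 0 < b)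
    (ξ : ℝ → ℝ) (hsmooth : ContDiffOn ℝ (⊤ : ℕ∞) ξ (Set.Ioo a b))
    (hξ0 : ξ 0 = 1 / 2)
    (hode : ∀ t ∈ Set.Ioo a b,
      ξ t ^ (m - 1) * deriv ξ t - ((m : ℝ) - 1) * t ^ (m - 2) * ξ t +
        ((m : ℝ) - 2) * t ^ (m - 1) = 0) :
    (fun t : ℝ =>
        ξ t - (1 / 2 + 2 ^ (m - 2) * t ^ (m - 1) -
          ((m : ℝ) - 2) / (m : ℝ) * 2 ^ (m - 1) * t ^ m)) =O[nhds 0]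
      (fun t : ℝ => t ^ (m + 1)) := by
  
  obtain ⟨k, rfl⟩ : ∃ k, m = k + 3 := ⟨m - 3, by omega⟩
  have h0ab : (0 : ℝ) ∈ Set.Ioo a b := ⟨ha, hb⟩
  have hdiff : ∀ t ∈ Set.Ioo a b, HasDerivAt ξ (deriv ξ t) t := by
    intro t ht
    exact ((hsmooth.contDiffAt (isOpen_Ioo.mem_nhds ht)).differentiableAt (by simp)).hasDerivAt
  have hcont : Tendsto ξ (nhds 0) (nhds (1/2)) := by
    rw [← hξ0]; exact (hdiff 0 h0ab).continuousAt
  have hev : ∀ᶠ t in nhds (0:ℝ), |ξ t - 1/2| ≤ 1/4 ∧ t ∈ Set.Ioo a b := by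
    have h1 : ∀ᶠ t in nhds (0:ℝ), dist (ξ t) (1/2) < 1/4 :=
      hcont (Metric.ball_mem_nhds _ (by norm_num))
    filter_upwards [h1, isOpen_Ioo.mem_nhds h0ab] with t h1 h2
    exact ⟨le_of_lt (by rwa [Real.dist_eq] at h1), h2⟩
  obtain ⟨ε, hε, hball⟩ := Metric.eventually_nhds_iff.1 hev
  set δ : ℝ := min (ε/2) 1 with hδdef
  have hδpos : 0 < δ := lt_min (by linarith) one_pos
  have hδ1 : δ ≤ 1 := min_le_right _ _
  have hIcc : ∀ t ∈ Set.Icc (-δ) δ, |ξ t - 1/2| ≤ 1/4 ∧ t ∈ Set.Ioo a b := by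
    intro t ht
    apply hball
    have h1 : |t| ≤ δ := abs_le.2 ⟨ht.1, ht.2⟩
    have h2 : |t| < ε := lt_of_le_of_lt h1 (lt_of_le_of_lt (min_le_left _ _) (by linarith))
    simpa [Real.dist_eq] using h2
  have hξlb : ∀ t ∈ Set.Icc (-δ) δ, 1/4 ≤ ξ t := by
    intro t ht
    have := abs_le.1 (hIcc t ht).1
    linarith [this.1]
  have hξub : ∀ t ∈ Set.Icc (-δ) δ, ξ t ≤ 1 := by
    intro t ht
    have := abs_le.1 (hIcc t ht).1
    linarith [this.2]
  have htle : ∀ t ∈ Set.Icc (-δ) δ, |t| ≤ 1 := by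
    intro t ht
    exact (abs_le.2 ⟨ht.1, ht.2⟩).trans hδ1
  -- ODE in convenient form
  have hode' : ∀ t ∈ Set.Icc (-δ) δ, ξ t ^ (k+2) * deriv ξ t =
      ((k:ℝ)+2) * t ^ (k+1) * ξ t - ((k:ℝ)+1) * t ^ (k+2) := by
    intro t ht
    have h := hode t (hIcc t ht).2
    have e1 : k + 3 - 1 = k + 2 := by omega
    have e2 : k + 3 - 2 = k + 1 := by omega
    rw [e1, e2] at h
    push_cast at h
    linarith
  -- dividing by ξ^(k+2)
  have hinv : ∀ t ∈ Set.Icc (-δ) δ, ∀ y : ℝ, |y| ≤ 4 ^ (k+2) * |ξ t ^ (k+2) * y| := by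
    intro t ht y
    have hlb := hξlb t ht
    have hx : (1/4 : ℝ) ^ (k+2) ≤ ξ t ^ (k+2) := pow_le_pow_left₀ (by norm_num) hlb _
    have hxpos : (0:ℝ) < ξ t ^ (k+2) := lt_of_lt_of_le (by positivity) hx
    have h3 : (1/4:ℝ)^(k+2) * |y| ≤ ξ t ^ (k+2) * |y| :=
      mul_le_mul_of_nonneg_right hx (abs_nonneg _)
    have h4 : ξ t ^ (k+2) * |y| = |ξ t ^ (k+2) * y| := by
      rw [abs_mul, abs_of_pos hxpos]
    rw [h4] at h3
    have h5 : |y| = 4^(k+2) * ((1/4:ℝ)^(k+2) * |y|) := by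
      rw [← mul_assoc, ← mul_pow]; norm_num
    rw [h5]
    exact mul_le_mul_of_nonneg_left h3 (by positivity)
  -- Step A: crude bound on deriv
  set C₁ : ℝ := 4^(k+2) * (2*(k:ℝ)+3) with hC₁def
  have hC₁nn : 0 ≤ C₁ := by positivity
  have hA' : ∀ t ∈ Set.Icc (-δ) δ, |deriv ξ t| ≤ C₁ * |t|^(k+1) := by
    intro t ht
    refine (hinv t ht (deriv ξ t)).trans ?_
    rw [hode' t ht]
    have h1 : |t| ≤ 1 := htle t ht
    have hxa : |ξ t| ≤ 1 := abs_le.2 ⟨by linarith [hξlb t ht], hξub t ht⟩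
    have h2 : |t|^(k+2) ≤ |t|^(k+1) :=
      pow_le_pow_of_le_one (abs_nonneg t) h1 (by omega)
    calc 4^(k+2) * |((k:ℝ)+2) * t ^ (k+1) * ξ t - ((k:ℝ)+1) * t ^ (k+2)|
        ≤ 4^(k+2) * (|((k:ℝ)+2) * t ^ (k+1) * ξ t| + |((k:ℝ)+1) * t ^ (k+2)|) := by
          gcongr
          exact abs_sub _ _
      _ = 4^(k+2) * (((k:ℝ)+2) * |t|^(k+1) * |ξ t| + ((k:ℝ)+1) * |t|^(k+2)) := by
          rw [abs_mul, abs_mul, abs_mul, abs_pow, abs_pow,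
            abs_of_nonneg (by positivity : (0:ℝ) ≤ (k:ℝ)+2),
            abs_of_nonneg (by positivity : (0:ℝ) ≤ (k:ℝ)+1)]
      _ ≤ 4^(k+2) * (((k:ℝ)+2) * |t|^(k+1) * 1 + ((k:ℝ)+1) * |t|^(k+1)) := by
          gcongr
      _ = C₁ * |t|^(k+1) := by rw [hC₁def]; ring
  have hA : ∀ t ∈ Set.Icc (-δ) δ, |ξ t - 1/2| ≤ C₁ * |t|^(k+2) := by
    have := aux_mvt δ C₁ hC₁nn (k+1) ξ (deriv ξ)
      (fun s hs => hdiff s (hIcc s hs).2) hA'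
    intro t ht
    have h := this t ht
    rwa [hξ0] at h
  -- Step B: refined bound on deriv ξ - q
  set K1 : ℝ := 1 + 2^(k+1)*((k:ℝ)+2) with hK1def
  set K2 : ℝ := 2^(k+2)*((k:ℝ)+2) with hK2def
  set D : ℝ := ((k:ℝ)+2) * (K1 * C₁) + ((k:ℝ)+1) * (K2 * C₁) with hDdef
  set C₂ : ℝ := 4^(k+2) * D with hC₂def
  have hC₂nn : 0 ≤ C₂ := by positivity
  set q : ℝ → ℝ := fun t => ((k:ℝ)+2) * 2^(k+1) * t^(k+1) - ((k:ℝ)+1) * 2^(k+2) * t^(k+2)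
    with hqdef
  have hB : ∀ t ∈ Set.Icc (-δ) δ, |deriv ξ t - q t| ≤ C₂ * |t|^(k+3) := by
    intro t ht
    have hu := hA t ht
    have hxa : |ξ t| ≤ 1 := abs_le.2 ⟨by linarith [hξlb t ht], hξub t ht⟩
    have h1 : |t| ≤ 1 := htle t ht
    have hpow : |ξ t ^ (k+2) - (1/2:ℝ)^(k+2)| ≤ ((k:ℝ)+2) * |ξ t - 1/2| := by
      have := aux_pow_sub_pow (ξ t) (1/2) hxa (abs_le.2 (by norm_num)) (k+2)
      push_cast at this
      linarith
    have hhalf1 : (2:ℝ)^(k+1) * (1/2:ℝ)^(k+2) = 1/2 := by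
      rw [div_pow, one_pow, pow_succ]
      field_simp
      ring
    have hhalf2 : (2:ℝ)^(k+2) * (1/2:ℝ)^(k+2) = 1 := by
      rw [← mul_pow]; norm_num
    have hE1 : |ξ t - 2^(k+1) * ξ t^(k+2)| ≤ K1 * (C₁ * |t|^(k+2)) := by
      have hid : ξ t - 2^(k+1) * ξ t^(k+2)
          = (ξ t - 1/2) - 2^(k+1) * (ξ t^(k+2) - (1/2:ℝ)^(k+2)) := by
        rw [mul_sub, hhalf1]; ring
      rw [hid]
      calc |(ξ t - 1/2) - 2^(k+1) * (ξ t^(k+2) - (1/2:ℝ)^(k+2))|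
          ≤ |ξ t - 1/2| + |(2:ℝ)^(k+1)| * |ξ t^(k+2) - (1/2:ℝ)^(k+2)| := by
            rw [← abs_mul]; exact abs_sub _ _
        _ ≤ C₁*|t|^(k+2) + 2^(k+1) * (((k:ℝ)+2) * (C₁*|t|^(k+2))) := by
            rw [abs_of_nonneg (by positivity : (0:ℝ) ≤ (2:ℝ)^(k+1))]
            gcongr
            exact hpow.trans (by gcongr)
        _ = K1 * (C₁ * |t|^(k+2)) := by rw [hK1def]; ring
    have hE2 : |1 - 2^(k+2) * ξ t^(k+2)| ≤ K2 * (C₁ * |t|^(k+2)) := by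
      have hid : 1 - 2^(k+2) * ξ t^(k+2)
          = 2^(k+2) * ((1/2:ℝ)^(k+2) - ξ t^(k+2)) := by
        rw [mul_sub, hhalf2]
      rw [hid, abs_mul, abs_of_nonneg (by positivity : (0:ℝ) ≤ (2:ℝ)^(k+2)), abs_sub_comm]
      calc (2:ℝ)^(k+2) * |ξ t^(k+2) - (1/2:ℝ)^(k+2)|
          ≤ 2^(k+2) * (((k:ℝ)+2) * (C₁*|t|^(k+2))) := by
            gcongr
            exact hpow.trans (by gcongr)
        _ = K2 * (C₁ * |t|^(k+2)) := by rw [hK2def]; ring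
    have hid2 : ξ t ^ (k+2) * (deriv ξ t - q t)
        = ((k:ℝ)+2)*t^(k+1)*(ξ t - 2^(k+1)*ξ t^(k+2))
          - ((k:ℝ)+1)*t^(k+2)*(1 - 2^(k+2)*ξ t^(k+2)) := by
      have h := hode' t ht
      rw [hqdef]
      ring_nf
      ring_nf at h
      linarith
    have hmul1 : |t|^(k+1) * |t|^(k+2) ≤ |t|^(k+3) := by
      rw [← pow_add]
      exact pow_le_pow_of_le_one (abs_nonneg t) h1 (by omega)
    have hmul2 : |t|^(k+2) * |t|^(k+2) ≤ |t|^(k+3) := by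
      rw [← pow_add]
      exact pow_le_pow_of_le_one (abs_nonneg t) h1 (by omega)
    calc |deriv ξ t - q t|
        ≤ 4 ^ (k+2) * |ξ t ^ (k+2) * (deriv ξ t - q t)| := hinv t ht _
      _ = 4 ^ (k+2) * |((k:ℝ)+2)*t^(k+1)*(ξ t - 2^(k+1)*ξ t^(k+2))
            - ((k:ℝ)+1)*t^(k+2)*(1 - 2^(k+2)*ξ t^(k+2))| := by rw [hid2]
      _ ≤ 4 ^ (k+2) * (|((k:ℝ)+2)*t^(k+1)*(ξ t - 2^(k+1)*ξ t^(k+2))|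
            + |((k:ℝ)+1)*t^(k+2)*(1 - 2^(k+2)*ξ t^(k+2))|) := by
          gcongr; exact abs_sub _ _
      _ = 4 ^ (k+2) * (((k:ℝ)+2)*|t|^(k+1)*|ξ t - 2^(k+1)*ξ t^(k+2)|
            + ((k:ℝ)+1)*|t|^(k+2)*|1 - 2^(k+2)*ξ t^(k+2)|) := by
          rw [abs_mul, abs_mul, abs_mul, abs_mul, abs_pow, abs_pow,
            abs_of_nonneg (by positivity : (0:ℝ) ≤ (k:ℝ)+2),
            abs_of_nonneg (by positivity : (0:ℝ) ≤ (k:ℝ)+1)]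
      _ ≤ 4 ^ (k+2) * (((k:ℝ)+2)*|t|^(k+1)*(K1*(C₁*|t|^(k+2)))
            + ((k:ℝ)+1)*|t|^(k+2)*(K2*(C₁*|t|^(k+2)))) := by gcongr
      _ = 4 ^ (k+2) * (((k:ℝ)+2)*(K1*C₁)*(|t|^(k+1)*|t|^(k+2))
            + ((k:ℝ)+1)*(K2*C₁)*(|t|^(k+2)*|t|^(k+2))) := by ring
      _ ≤ 4 ^ (k+2) * (((k:ℝ)+2)*(K1*C₁)*|t|^(k+3)
            + ((k:ℝ)+1)*(K2*C₁)*|t|^(k+3)) := by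
          gcongr <;> positivity
      _ = C₂ * |t|^(k+3) := by rw [hC₂def, hDdef]; ring
  -- integrate step B
  set g : ℝ → ℝ := fun t => ξ t - (2^(k+1)*t^(k+2)
    - ((k:ℝ)+1)/((k:ℝ)+3)*2^(k+2)*t^(k+3)) with hgdef
  have hg : ∀ s ∈ Set.Icc (-δ) δ, HasDerivAt g (deriv ξ s - q s) s := by
    intro s hs
    have h1 : HasDerivAt (fun t : ℝ => 2^(k+1)*t^(k+2)
        - ((k:ℝ)+1)/((k:ℝ)+3)*2^(k+2)*t^(k+3)) (q s) s := by
      have ha0 : HasDerivAt (fun t : ℝ => t^(k+2)) ((↑(k+2):ℝ) * s^(k+1)) s := by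
        have := hasDerivAt_pow (k+2) s
        rwa [show k+2-1 = k+1 from by omega] at this
      have hb0 : HasDerivAt (fun t : ℝ => t^(k+3)) ((↑(k+3):ℝ) * s^(k+2)) s := by
        have := hasDerivAt_pow (k+3) s
        rwa [show k+3-1 = k+2 from by omega] at this
      have := (ha0.const_mul ((2:ℝ)^(k+1))).sub
        (hb0.const_mul (((k:ℝ)+1)/((k:ℝ)+3)*2^(k+2)))
      refine this.congr_deriv ?_
      rw [hqdef]
      have hk3 : ((k:ℝ)+3) ≠ 0 := by positivity
      push_cast
      field_simp
    exact (hdiff s (hIcc s hs).2).sub h1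
  have hfinal := aux_mvt δ C₂ hC₂nn (k+3) g (fun s => deriv ξ s - q s) hg hB
  -- conclusion
  rw [Asymptotics.isBigO_iff]
  refine ⟨C₂, ?_⟩
  have hmem : Set.Icc (-δ) δ ∈ nhds (0:ℝ) := Icc_mem_nhds (by linarith) hδpos
  filter_upwards [hmem] with t ht
  have h := hfinal t ht
  have hg0 : g 0 = 1/2 := by simp [hgdef, hξ0]
  rw [hg0] at h
  simp only [Real.norm_eq_abs]
  rw [show k+3-2 = k+1 from by omega, show k+3-1 = k+2 from by omega, abs_pow]
  have heq : ξ t - (1 / 2 + 2 ^ (k+1) * t ^ (k+2) -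
      ((k+3 : ℝ) - 2) / ((k+3 : ℕ) : ℝ) * 2 ^ (k+2) * t ^ (k+3)) = g t - 1/2 := by
    rw [hgdef]
    push_cast
    ring
  push_cast
  rw [show k+3+1 = k+4 from by omega]
  calc |ξ t - (1 / 2 + 2 ^ (k+1) * t ^ (k+2) -
        ((k:ℝ) + 3 - 2) / ((k:ℝ)+3) * 2 ^ (k+2) * t ^ (k+3))| = |g t - 1/2| := by
        rw [hgdef]; ring_nf
    _ ≤ C₂ * |t|^(k+4) := h
end
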